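/- arXiv:2507.12906 — 9 statements merged into one kernel-verified Lean document; each statement's English description precedes it below -/
import Mathlib

section
/- Let b ≥ 2 be an integer and let g = 2, so that necessarily d₁ = d₂ = 1. If (l, m, n) with l, m ≥ 1 and n ≥ 0 is a solution of (b+ε₁)·b^n + ε₂ = (2^l − 1) + ε₃·(2^m − 1) for some signs ε₁, ε₂, ε₃ ∈ {1, −1}, then n = 0; in particular such a solution exists only when b is of the form b = (2^l − 1) + ε₃·(2^m − 1) − ε₁ − ε₂ for some positive integers l, m. -/
/-! For `n ≥ 1` one of `b`, `b + ε₁` is even, so the left-hand side is odd, whereas the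
right-hand side is a sum of two odd numbers. -/

lemma Int.odd_of_eq_one_or_eq_neg_one {ε : ℤ} (h : ε = 1 ∨ ε = -1) : Odd ε := by
  rcases h with rfl | rfl
  · exact odd_one
  · exact odd_one.neg

lemma Int.even_add_mul_pow_succ {b e : ℤ} (he : Odd e) (k : ℕ) :
    Even ((b + e) * b ^ (k + 1)) := by
  rw [Int.even_mul, Int.even_pow]
  by_cases hb : Even b
  · exact Or.inr ⟨hb, k.succ_ne_zero⟩
  · exact Or.inl ((Int.not_even_iff_odd.mp hb).add_odd he)

lemma Int.odd_two_pow_sub_one {k : ℕ} (hk : k ≠ 0) : Odd ((2 : ℤ) ^ k - 1) :=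
  (Int.even_pow.mpr ⟨even_two, hk⟩).sub_odd odd_one

lemma Int.even_two_pow_sub_one_add_mul {ε : ℤ} (hε : Odd ε) {l m : ℕ} (hl : l ≠ 0)
    (hm : m ≠ 0) : Even ((2 : ℤ) ^ l - 1 + ε * ((2 : ℤ) ^ m - 1)) :=
  (Int.odd_two_pow_sub_one hl).add_odd (hε.mul (Int.odd_two_pow_sub_one hm))

theorem stmt_5_general (b : ℤ)
    (ε₁ ε₂ ε₃ : ℤ) (hε₁ : ε₁ = 1 ∨ ε₁ = -1) (hε₂ : ε₂ = 1 ∨ ε₂ = -1)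
    (hε₃ : ε₃ = 1 ∨ ε₃ = -1) (l m n : ℕ) (hl : 1 ≤ l) (hm : 1 ≤ m)
    (heq : (b + ε₁) * b ^ n + ε₂ = ((2 : ℤ) ^ l - 1) + ε₃ * ((2 : ℤ) ^ m - 1)) :
    n = 0 ∧ b = ((2 : ℤ) ^ l - 1) + ε₃ * ((2 : ℤ) ^ m - 1) - ε₁ - ε₂ := by
  obtain _ | k := n
  · rw [pow_zero, mul_one] at heq
    exact ⟨rfl, by linarith⟩
  have lhs_odd : Odd ((b + ε₁) * b ^ (k + 1) + ε₂) :=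
    (Int.even_add_mul_pow_succ (Int.odd_of_eq_one_or_eq_neg_one hε₁) k).add_odd
      (Int.odd_of_eq_one_or_eq_neg_one hε₂)
  have rhs_even := Int.even_two_pow_sub_one_add_mul (Int.odd_of_eq_one_or_eq_neg_one hε₃)
    (Nat.one_le_iff_ne_zero.mp hl) (Nat.one_le_iff_ne_zero.mp hm)
  rw [heq] at lhs_odd
  exact absurd rhs_even (Int.not_even_iff_odd.mpr lhs_odd)

/-- Lemma (case `g = 2`): if `(b + ε₁)·b^n + ε₂ = (2^l − 1) + ε₃·(2^m − 1)` with
`b ≥ 2`, `l, m ≥ 1`, `n ≥ 0` and signs `ε₁, ε₂, ε₃ ∈ {1, −1}`, then `n = 0`;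
in particular `b = (2^l − 1) + ε₃·(2^m − 1) − ε₁ − ε₂`. -/
theorem stmt_5 (b : ℤ) (hb : 2 ≤ b)
    (ε₁ ε₂ ε₃ : ℤ) (hε₁ : ε₁ = 1 ∨ ε₁ = -1) (hε₂ : ε₂ = 1 ∨ ε₂ = -1)
    (hε₃ : ε₃ = 1 ∨ ε₃ = -1) (l m n : ℕ) (hl : 1 ≤ l) (hm : 1 ≤ m)
    (heq : (b + ε₁) * b ^ n + ε₂ = ((2 : ℤ) ^ l - 1) + ε₃ * ((2 : ℤ) ^ m - 1)) :
    n = 0 ∧ b = ((2 : ℤ) ^ l - 1) + ε₃ * ((2 : ℤ) ^ m - 1) - ε₁ - ε₂ :=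
  stmt_5_general b ε₁ ε₂ ε₃ hε₁ hε₂ hε₃ l m n hl hm heq
end

section
/- Let b ≥ 2 and g ≥ 3 be integers and ε₁, ε₂ ∈ {1, −1}. Every solution (d₁, d₂, l, m, n) in integers 1 ≤ d₁, d₂ ≤ g−1, n ≥ 0, 1 ≤ l ≤ m of the equation (b+ε₁)·b^n + ε₂ = d₁·(g^l−1)/(g−1) + d₂·(g^m−1)/(g−1) satisfies n < 2.5·m·log g. -/
/-!
Both repdigits are at most `g^m - 1` and the left side is at least `b^n - 1`, so `b^n < 2 g^m`.
Taking logarithms, `n log 2 < log 2 + m log g`, and since `m log g ≥ log 3 > 1` the additive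
`log 2` is absorbed: `n < (1 + 1/log 2) · m log g < 2.5 · m log g`.
-/

/-- The equation expressing a Thabit (`ε₁ = 1`) or Williams (`ε₁ = −1`) number
`(b + ε₁)·b^n + ε₂` as a sum of two `g`-repdigits. -/
def SumRepdigitEq (b g ε₁ ε₂ d₁ d₂ : ℤ) (l m n : ℕ) : Prop :=
  (b + ε₁) * b ^ n + ε₂ = d₁ * ((g ^ l - 1) / (g - 1)) + d₂ * ((g ^ m - 1) / (g - 1))

theorem mul_repunit_le_pow_sub_one {g d : ℤ} (hg : 1 ≤ g) (hd : d ≤ g - 1) (k : ℕ) :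
    d * ((g ^ k - 1) / (g - 1)) ≤ g ^ k - 1 := by
  have hq : (g - 1) * ((g ^ k - 1) / (g - 1)) = g ^ k - 1 :=
    Int.mul_ediv_cancel' (by simpa using sub_dvd_pow_sub_pow g 1 k)
  have hq0 : 0 ≤ (g ^ k - 1) / (g - 1) :=
    Int.ediv_nonneg (by linarith [one_le_pow₀ hg (n := k)]) (by linarith)
  calc d * ((g ^ k - 1) / (g - 1)) ≤ (g - 1) * ((g ^ k - 1) / (g - 1)) :=
        mul_le_mul_of_nonneg_right hd hq0
    _ = g ^ k - 1 := hq

theorem SumRepdigitEq.pow_lt_two_mul_pow {b g ε₁ ε₂ d₁ d₂ : ℤ} {l m n : ℕ}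
    (hb : 0 ≤ b) (hg : 1 ≤ g) (hε₁ : 1 ≤ b + ε₁) (hε₂ : -1 ≤ ε₂)
    (hd₁ : d₁ ≤ g - 1) (hd₂ : d₂ ≤ g - 1) (hlm : l ≤ m)
    (h : SumRepdigitEq b g ε₁ ε₂ d₁ d₂ l m n) : b ^ n < 2 * g ^ m := by
  have hlhs : b ^ n - 1 ≤ (b + ε₁) * b ^ n + ε₂ := by nlinarith [pow_nonneg hb n]
  have hgl : g ^ l ≤ g ^ m := pow_le_pow_right₀ hg hlm
  linarith [mul_repunit_le_pow_sub_one hg hd₁ l, mul_repunit_le_pow_sub_one hg hd₂ m, h.symm]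

theorem Real.one_lt_log_three : 1 < Real.log 3 :=
  (Real.lt_log_iff_exp_lt (by norm_num)).2 Real.exp_one_lt_three

theorem lt_mul_log_of_pow_lt_two_mul_pow {b g : ℝ} {m n : ℕ} (hb : 2 ≤ b) (hg : 3 ≤ g) (hm : 1 ≤ m)
    (h : b ^ n < 2 * g ^ m) : (n : ℝ) < 2.5 * m * Real.log g := by
  have hlog : n * Real.log b < Real.log 2 + m * Real.log g := by
    have := Real.log_lt_log (by positivity) h
    rwa [Real.log_pow, Real.log_mul two_ne_zero (by positivity), Real.log_pow] at this
  have hlogb : Real.log 2 ≤ Real.log b := Real.log_le_log two_pos hb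
  have hX : 1 < m * Real.log g := by
    have hlogg : Real.log 3 ≤ Real.log g := Real.log_le_log (by norm_num) hg
    have hm' : (1 : ℝ) ≤ m := by exact_mod_cast hm
    nlinarith [Real.one_lt_log_three]
  have hn : n * Real.log 2 < Real.log 2 + m * Real.log g := by
    nlinarith [mul_le_mul_of_nonneg_left hlogb n.cast_nonneg]
  nlinarith [Real.log_two_gt_d9, Real.log_two_lt_d9]

theorem stmt_6_general (b g : ℤ) (hb : 2 ≤ b) (hg : 3 ≤ g)
    (ε₁ ε₂ : ℤ) (hε₁ : ε₁ = 1 ∨ ε₁ = -1) (hε₂ : ε₂ = 1 ∨ ε₂ = -1)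
    (d₁ d₂ : ℤ) (l m n : ℕ)
    (hd₁' : d₁ ≤ g - 1) (hd₂' : d₂ ≤ g - 1)
    (hl : 1 ≤ l) (hlm : l ≤ m)
    (heq : SumRepdigitEq b g ε₁ ε₂ d₁ d₂ l m n) :
    (n : ℝ) < 2.5 * m * Real.log g := by
  have hε₁' : 1 ≤ b + ε₁ := by rcases hε₁ with rfl | rfl <;> linarith
  have hε₂' : -1 ≤ ε₂ := by rcases hε₂ with rfl | rfl <;> norm_num
  have hpow : b ^ n < 2 * g ^ m :=
    heq.pow_lt_two_mul_pow (by linarith) (by linarith) hε₁' hε₂' hd₁' hd₂' hlm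
  exact lt_mul_log_of_pow_lt_two_mul_pow (b := (b : ℝ)) (by exact_mod_cast hb) (by exact_mod_cast hg)
    (hl.trans hlm) (by exact_mod_cast hpow)

/-- Lemma: every solution of the sum equation with `b ≥ 2`, `g ≥ 3`,
`1 ≤ d₁, d₂ ≤ g−1`, `1 ≤ l ≤ m`, `n ≥ 0` satisfies `n < 2.5·m·log g`. -/
theorem stmt_6 (b g : ℤ) (hb : 2 ≤ b) (hg : 3 ≤ g)
    (ε₁ ε₂ : ℤ) (hε₁ : ε₁ = 1 ∨ ε₁ = -1) (hε₂ : ε₂ = 1 ∨ ε₂ = -1)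
    (d₁ d₂ : ℤ) (l m n : ℕ)
    (hd₁ : 1 ≤ d₁) (hd₁' : d₁ ≤ g - 1) (hd₂ : 1 ≤ d₂) (hd₂' : d₂ ≤ g - 1)
    (hl : 1 ≤ l) (hlm : l ≤ m)
    (heq : SumRepdigitEq b g ε₁ ε₂ d₁ d₂ l m n) :
    (n : ℝ) < 2.5 * m * Real.log g :=
  stmt_6_general b g hb hg ε₁ ε₂ hε₁ hε₂ d₁ d₂ l m n hd₁' hd₂' hl hlm heq
end

section
/- Let b ≥ 2 and g ≥ 3 be integers and ε₁, ε₂ ∈ {1, −1}. Every solution (d₁, d₂, l, m, n) in integers 1 ≤ d₁, d₂ ≤ g−1, n ≥ 0, 1 ≤ l ≤ m of the equation (b+ε₁)·b^n + ε₂ = d₁·(g^l−1)/(g−1) + d₂·(g^m−1)/(g−1) satisfies l ≤ m < 1.3·(n + 1.6)·(log b)/(log g) + 1. -/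
/-!
Dropping the first repdigit and bounding the digit `d₂` below by `1`, the `m`-digit repunit
`(g^m - 1)/(g - 1)` is at most `(b + 1)·b^n + 1 ≤ b^(n+2)`. Since `g^m = (g - 1)·repunit + 1`,
this gives `g^m ≤ g·b^(n+2)`, i.e. `m ≤ 1 + (n + 2)·log b / log g`, and `n + 2 < 1.3·(n + 1.6)`.
-/

/-- Also true at `g = 1`, where the division by `0` returns `0` but `g^k - 1 = 0` as well. -/
lemma Int.pow_eq_sub_one_mul_repunit_add_one (g : ℤ) (k : ℕ) :
    g ^ k = (g - 1) * ((g ^ k - 1) / (g - 1)) + 1 := by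
  rw [Int.mul_ediv_cancel' (sub_one_dvd_pow_sub_one g k)]
  ring

lemma Int.repunit_nonneg {g : ℤ} (hg : 1 ≤ g) (k : ℕ) : 0 ≤ (g ^ k - 1) / (g - 1) :=
  Int.ediv_nonneg (by linarith [one_le_pow₀ (n := k) hg]) (by linarith)

lemma Int.pow_le_mul_of_repunit_le {g N : ℤ} {k : ℕ} (hg : 1 ≤ g) (hN : 1 ≤ N)
    (h : (g ^ k - 1) / (g - 1) ≤ N) : g ^ k ≤ g * N := by
  rw [Int.pow_eq_sub_one_mul_repunit_add_one g k]
  nlinarith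

lemma Int.add_mul_pow_add_le_pow_add_two {b ε₁ ε₂ : ℤ} (hb : 2 ≤ b) (hε₁ : ε₁ ≤ 1)
    (hε₂ : ε₂ ≤ 1) (n : ℕ) : (b + ε₁) * b ^ n + ε₂ ≤ b ^ (n + 2) := by
  have hpow : 1 ≤ b ^ n := one_le_pow₀ (by linarith)
  calc (b + ε₁) * b ^ n + ε₂ ≤ (b + 1) * b ^ n + b ^ n * 1 := by nlinarith
    _ ≤ (b + 1) * b ^ n + b ^ n * (b * b - b - 1) := by gcongr; nlinarith
    _ = b ^ (n + 2) := by ring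

lemma SumRepdigitEq.repunit_le {b g ε₁ ε₂ d₁ d₂ : ℤ} {l m n : ℕ}
    (heq : SumRepdigitEq b g ε₁ ε₂ d₁ d₂ l m n) (hb : 2 ≤ b) (hg : 1 ≤ g)
    (hε₁ : ε₁ ≤ 1) (hε₂ : ε₂ ≤ 1) (hd₁ : 0 ≤ d₁) (hd₂ : 1 ≤ d₂) :
    (g ^ m - 1) / (g - 1) ≤ b ^ (n + 2) := by
  have hl := mul_nonneg hd₁ (Int.repunit_nonneg hg l)
  have hm := mul_le_mul_of_nonneg_right hd₂ (Int.repunit_nonneg hg m)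
  have := Int.add_mul_pow_add_le_pow_add_two hb hε₁ hε₂ n
  rw [SumRepdigitEq] at heq
  linarith

lemma Real.nat_le_one_add_mul_log_div_log {g b : ℝ} {m k : ℕ} (hg : 1 < g) (hb : 0 < b)
    (h : g ^ m ≤ g * b ^ k) : (m : ℝ) ≤ 1 + k * (Real.log b / Real.log g) := by
  have hlog := Real.log_le_log (by positivity) h
  rw [Real.log_mul (by positivity) (by positivity), Real.log_pow, Real.log_pow] at hlog
  have hlg : 0 < Real.log g := Real.log_pos hg
  rw [mul_div_assoc', ← sub_le_iff_le_add', le_div_iff₀ hlg]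
  linarith

theorem stmt_7_general (b g : ℤ) (hb : 2 ≤ b) (hg : 3 ≤ g)
    (ε₁ ε₂ : ℤ) (hε₁ : ε₁ = 1 ∨ ε₁ = -1) (hε₂ : ε₂ = 1 ∨ ε₂ = -1)
    (d₁ d₂ : ℤ) (l m n : ℕ)
    (hd₁ : 1 ≤ d₁) (hd₂ : 1 ≤ d₂)
    (heq : SumRepdigitEq b g ε₁ ε₂ d₁ d₂ l m n) :
    (m : ℝ) < 1.3 * ((n : ℝ) + 1.6) * (Real.log b / Real.log g) + 1 := by
  have hrepunit := heq.repunit_le hb (by linarith) (by omega) (by omega) (by linarith) hd₂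
  have hpow : g ^ m ≤ g * b ^ (n + 2) :=
    Int.pow_le_mul_of_repunit_le (by linarith) (one_le_pow₀ (by linarith)) hrepunit
  have hm := Real.nat_le_one_add_mul_log_div_log (g := (g : ℝ)) (b := (b : ℝ)) (k := n + 2)
    (by exact_mod_cast (by linarith : 1 < g)) (by exact_mod_cast (by linarith : 0 < b))
    (by exact_mod_cast hpow)
  have hρ : 0 < Real.log b / Real.log g :=
    div_pos (Real.log_pos (by exact_mod_cast (by linarith : 1 < b)))
      (Real.log_pos (by exact_mod_cast (by linarith : 1 < g)))
  have hn : ((n + 2 : ℕ) : ℝ) < 1.3 * ((n : ℝ) + 1.6) := by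
    push_cast; linarith [(Nat.cast_nonneg n : (0 : ℝ) ≤ n)]
  linarith [mul_lt_mul_of_pos_right hn hρ]

/-- Lemma: every solution of the sum equation with `b ≥ 2`, `g ≥ 3`,
`1 ≤ d₁, d₂ ≤ g−1`, `1 ≤ l ≤ m`, `n ≥ 0` satisfies
`l ≤ m < 1.3·(n + 1.6)·(log b)/(log g) + 1`. -/
theorem stmt_7 (b g : ℤ) (hb : 2 ≤ b) (hg : 3 ≤ g)
    (ε₁ ε₂ : ℤ) (hε₁ : ε₁ = 1 ∨ ε₁ = -1) (hε₂ : ε₂ = 1 ∨ ε₂ = -1)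
    (d₁ d₂ : ℤ) (l m n : ℕ)
    (hd₁ : 1 ≤ d₁) (hd₁' : d₁ ≤ g - 1) (hd₂ : 1 ≤ d₂) (hd₂' : d₂ ≤ g - 1)
    (hl : 1 ≤ l) (hlm : l ≤ m)
    (heq : SumRepdigitEq b g ε₁ ε₂ d₁ d₂ l m n) :
    (m : ℝ) < 1.3 * ((n : ℝ) + 1.6) * (Real.log b / Real.log g) + 1 :=
  stmt_7_general b g hb hg ε₁ ε₂ hε₁ hε₂ d₁ d₂ l m n hd₁ hd₂ heq
end

section
/- Let b ≥ 2 and g ≥ 3 be integers and ε₁, ε₂ ∈ {1, −1}. Suppose (d₁, d₂, l, m, n) with 1 ≤ d₁, d₂ ≤ g−1, n ≥ 0, 1 ≤ l ≤ m is a solution of (b+ε₁)·b^n + ε₂ = d₁·(g^l−1)/(g−1) + d₂·(g^m−1)/(g−1) which in addition satisfies (b+ε₁)·b^n·(g−1) = d₂·g^m. Then d₂ = g−1, l = 1, d₁ = 2, ε₂ = 1 and (b+ε₁)·b^n = g^m. Moreover, if b + ε₁ ≥ 2 (i.e. excluding the case b = 2, ε₁ = −1, where there are infinitely many such solutions with g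 a power of 2), then m ≤ log(b+ε₁)/log 2. -/
/-!
Since `g - 1` is coprime to `g`, the vanishing of `Λ₁` forces `g - 1 ∣ d₂`, so `d₂ = g - 1` and
`(b + ε₁)·b^n = g^m`. The repdigit `d₂·(g^m - 1)/(g - 1) = g^m - 1` then absorbs the Thabit/Williams
number up to `1`, leaving `d₁·(g^l - 1)/(g - 1) = ε₂ + 1 ≤ 2`, which only `l = 1`, `d₁ = 2`,
`ε₂ = 1` satisfy. Finally `b + ε₁` is coprime to `b`, so `(b + ε₁)·b^n = g^m` makes `b + ε₁` a
perfect `m`-th power, hence at least `2^m` once it exceeds `1`.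
-/

lemma sub_one_dvd_of_dvd_mul_pow {R : Type*} [CommRing R] {g d : R} {m : ℕ}
    (h : g - 1 ∣ d * g ^ m) : g - 1 ∣ d :=
  ((IsCoprime.sub_one_left_of_dvd dvd_rfl).pow_right).dvd_of_dvd_mul_right h

lemma sub_one_mul_repunit (g : ℤ) (l : ℕ) : (g - 1) * ((g ^ l - 1) / (g - 1)) = g ^ l - 1 :=
  Int.mul_ediv_cancel' (sub_one_dvd_pow_sub_one g l)

section Repunit

variable {g : ℤ} {l : ℕ}

lemma one_le_repunit (hg : 2 ≤ g) (hl : 1 ≤ l) : 1 ≤ (g ^ l - 1) / (g - 1) := by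
  have hgl : g ≤ g ^ l := le_self_pow₀ (by omega) (by omega)
  nlinarith [sub_one_mul_repunit g l]

lemma add_one_le_repunit (hg : 2 ≤ g) (hl : 2 ≤ l) : g + 1 ≤ (g ^ l - 1) / (g - 1) := by
  have hgl : g ^ 2 ≤ g ^ l := pow_le_pow_right₀ (by omega) hl
  nlinarith [sub_one_mul_repunit g l]

lemma eq_two_of_mul_repunit_eq_add_one {d ε : ℤ} (hg : 2 ≤ g) (hd : 1 ≤ d) (hl : 1 ≤ l)
    (hε : ε = 1 ∨ ε = -1) (h : d * ((g ^ l - 1) / (g - 1)) = ε + 1) :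
    l = 1 ∧ d = 2 ∧ ε = 1 := by
  have hR := one_le_repunit hg hl
  have hε₁ : ε = 1 := hε.resolve_right fun hε => by nlinarith
  obtain rfl : l = 1 := by
    by_contra hl₁
    nlinarith [add_one_le_repunit hg (by omega : 2 ≤ l)]
  rw [pow_one, Int.ediv_self (by omega), mul_one] at h
  exact ⟨rfl, by omega, hε₁⟩

end Repunit

lemma Nat.two_pow_le_of_coprime_of_mul_eq_pow {a b c m : ℕ} (hab : a.Coprime b) (ha : 2 ≤ a)
    (h : a * b = c ^ m) : 2 ^ m ≤ a := by
  obtain ⟨e, rfl⟩ := exists_eq_pow_of_mul_eq_pow (by rwa [Nat.isUnit_iff]) h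
  have he : 2 ≤ e := by
    by_contra! he
    have : e ^ m ≤ 1 := pow_le_one₀ (by omega) (by omega)
    omega
  exact Nat.pow_le_pow_left he m

lemma Int.two_pow_le_of_coprime_of_mul_pow_eq_pow {a b g : ℤ} {m n : ℕ} (hab : IsCoprime a b)
    (ha : 2 ≤ a) (h : a * b ^ n = g ^ m) : 2 ^ m ≤ a := by
  have hcop : a.natAbs.Coprime (b.natAbs ^ n) :=
    Nat.Coprime.pow_right n (Int.isCoprime_iff_gcd_eq_one.mp hab)
  have habs : a.natAbs * b.natAbs ^ n = g.natAbs ^ m := by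
    simpa [Int.natAbs_mul, Int.natAbs_pow] using congrArg Int.natAbs h
  calc (2 : ℤ) ^ m = ((2 ^ m : ℕ) : ℤ) := by push_cast; rfl
    _ ≤ a.natAbs := by exact_mod_cast Nat.two_pow_le_of_coprime_of_mul_eq_pow hcop (by omega) habs
    _ = a := Int.natAbs_of_nonneg (by omega)

lemma Real.natCast_le_log_div_log_of_pow_le {a b : ℝ} {m : ℕ} (hb : 1 < b) (h : b ^ m ≤ a) :
    (m : ℝ) ≤ Real.log a / Real.log b := by
  rw [le_div_iff₀ (Real.log_pos hb), ← Real.log_pow]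
  exact Real.log_le_log (by positivity) h

theorem stmt_8_general (b g : ℤ) (hg : 3 ≤ g)
    (ε₁ ε₂ : ℤ) (hε₁ : ε₁ = 1 ∨ ε₁ = -1) (hε₂ : ε₂ = 1 ∨ ε₂ = -1)
    (d₁ d₂ : ℤ) (l m n : ℕ)
    (hd₁ : 1 ≤ d₁) (hd₂ : 1 ≤ d₂) (hd₂' : d₂ ≤ g - 1)
    (hl : 1 ≤ l)
    (heq : SumRepdigitEq b g ε₁ ε₂ d₁ d₂ l m n)
    (hΛ₁ : (b + ε₁) * b ^ n * (g - 1) = d₂ * g ^ m) :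
    d₂ = g - 1 ∧ l = 1 ∧ d₁ = 2 ∧ ε₂ = 1 ∧ (b + ε₁) * b ^ n = g ^ m ∧
      (2 ≤ b + ε₁ → (m : ℝ) ≤ Real.log (b + ε₁) / Real.log 2) := by
  have hd₂g : d₂ = g - 1 :=
    le_antisymm hd₂' (Int.le_of_dvd (by omega) (sub_one_dvd_of_dvd_mul_pow (Dvd.intro_left _ hΛ₁)))
  have hpow : (b + ε₁) * b ^ n = g ^ m :=
    mul_right_cancel₀ (by omega : g - 1 ≠ 0) (by rw [hΛ₁, hd₂g, mul_comm])
  have hrep : d₁ * ((g ^ l - 1) / (g - 1)) = ε₂ + 1 := by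
    rw [SumRepdigitEq, hd₂g, sub_one_mul_repunit, hpow] at heq
    linarith
  obtain ⟨hl₁, hd₁₂, hε₂₁⟩ := eq_two_of_mul_repunit_eq_add_one (by omega) hd₁ hl hε₂ hrep
  refine ⟨hd₂g, hl₁, hd₁₂, hε₂₁, hpow, fun h2 => ?_⟩
  have hcop : IsCoprime (b + ε₁) b := by
    rcases hε₁ with rfl | rfl
    · exact .add_one_left_of_dvd dvd_rfl
    · simpa only [← sub_eq_add_neg] using IsCoprime.sub_one_left_of_dvd dvd_rfl
  have h2pow := Int.two_pow_le_of_coprime_of_mul_pow_eq_pow hcop h2 hpow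
  exact Real.natCast_le_log_div_log_of_pow_le one_lt_two (by exact_mod_cast h2pow)

/-- Lemma (vanishing of `Λ₁`): if a solution of the sum equation moreover satisfies
`(b + ε₁)·b^n·(g−1) = d₂·g^m`, then `d₂ = g−1`, `l = 1`, `d₁ = 2`, `ε₂ = 1` and
`(b + ε₁)·b^n = g^m`; moreover if `b + ε₁ ≥ 2` then `m ≤ log(b + ε₁)/log 2`. -/
theorem stmt_8 (b g : ℤ) (hb : 2 ≤ b) (hg : 3 ≤ g)
    (ε₁ ε₂ : ℤ) (hε₁ : ε₁ = 1 ∨ ε₁ = -1) (hε₂ : ε₂ = 1 ∨ ε₂ = -1)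
    (d₁ d₂ : ℤ) (l m n : ℕ)
    (hd₁ : 1 ≤ d₁) (hd₁' : d₁ ≤ g - 1) (hd₂ : 1 ≤ d₂) (hd₂' : d₂ ≤ g - 1)
    (hl : 1 ≤ l) (hlm : l ≤ m)
    (heq : SumRepdigitEq b g ε₁ ε₂ d₁ d₂ l m n)
    (hΛ₁ : (b + ε₁) * b ^ n * (g - 1) = d₂ * g ^ m) :
    d₂ = g - 1 ∧ l = 1 ∧ d₁ = 2 ∧ ε₂ = 1 ∧ (b + ε₁) * b ^ n = g ^ m ∧
      (2 ≤ b + ε₁ → (m : ℝ) ≤ Real.log (b + ε₁) / Real.log 2) :=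
  stmt_8_general b g hg ε₁ ε₂ hε₁ hε₂ d₁ d₂ l m n hd₁ hd₂ hd₂' hl heq hΛ₁
end

section
/- Let b ≥ 2 and g ≥ 3 be integers and ε₁, ε₂ ∈ {1, −1}. No solution (d₁, d₂, l, m, n) in integers 1 ≤ d₁, d₂ ≤ g−1, n ≥ 0, l, m ≥ 1 of the equation (b+ε₁)·b^n + ε₂ = d₁·(g^l−1)/(g−1) − d₂·(g^m−1)/(g−1) satisfies (b+ε₁)·b^n·(g−1) = d₁·g^l. -/
/-! Multiplying the equation by `g − 1` and subtracting `(b + ε₁)·b^n·(g − 1) = d₁·g^l` leaves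
`ε₂·(g − 1) = −d₁ − d₂·(g^m − 1)`, whose right-hand side is at most `−g`, too small for `±(g − 1)`. -/

/-- The equation expressing a Thabit (`ε₁ = 1`) or Williams (`ε₁ = −1`) number
`(b + ε₁)·b^n + ε₂` as a difference of two `g`-repdigits. -/
def DiffRepdigitEq (b g ε₁ ε₂ d₁ d₂ : ℤ) (l m n : ℕ) : Prop :=
  (b + ε₁) * b ^ n + ε₂ = d₁ * ((g ^ l - 1) / (g - 1)) - d₂ * ((g ^ m - 1) / (g - 1))

theorem Int.pow_sub_one_ediv_sub_one_mul (g : ℤ) (k : ℕ) :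
    (g ^ k - 1) / (g - 1) * (g - 1) = g ^ k - 1 :=
  Int.ediv_mul_cancel (by simpa using sub_dvd_pow_sub_pow g 1 k)

theorem DiffRepdigitEq.mul_sub_one {b g ε₁ ε₂ d₁ d₂ : ℤ} {l m n : ℕ}
    (h : DiffRepdigitEq b g ε₁ ε₂ d₁ d₂ l m n) :
    ((b + ε₁) * b ^ n + ε₂) * (g - 1) = d₁ * (g ^ l - 1) - d₂ * (g ^ m - 1) := by
  rw [h, sub_mul, mul_assoc, mul_assoc, Int.pow_sub_one_ediv_sub_one_mul,
    Int.pow_sub_one_ediv_sub_one_mul]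

theorem sub_one_lt_add_mul_pow_sub_one {g d₁ d₂ : ℤ} {m : ℕ} (hg : 1 ≤ g)
    (hd₁ : 1 ≤ d₁) (hd₂ : 1 ≤ d₂) (hm : 1 ≤ m) :
    g - 1 < d₁ + d₂ * (g ^ m - 1) := by
  have hgm : g ≤ g ^ m := le_self_pow₀ hg (by omega)
  nlinarith

theorem stmt_13_general (b g : ℤ) (hg : 3 ≤ g)
    (ε₁ ε₂ : ℤ) (hε₂ : ε₂ = 1 ∨ ε₂ = -1)
    (d₁ d₂ : ℤ) (l m n : ℕ)
    (hd₁ : 1 ≤ d₁) (hd₂ : 1 ≤ d₂)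
    (hm : 1 ≤ m)
    (heq : DiffRepdigitEq b g ε₁ ε₂ d₁ d₂ l m n) :
    (b + ε₁) * b ^ n * (g - 1) ≠ d₁ * g ^ l := by
  intro h
  have hε₂g : ε₂ * (g - 1) = -(d₁ + d₂ * (g ^ m - 1)) := by
    linear_combination heq.mul_sub_one - h
  have hlt := sub_one_lt_add_mul_pow_sub_one (g := g) (by omega) hd₁ hd₂ hm
  rcases hε₂ with rfl | rfl <;> linarith

/-- Lemma (`Λ₃ ≠ 0`): no solution of the difference equation satisfies
`(b + ε₁)·b^n·(g−1) = d₁·g^l`. -/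
theorem stmt_13 (b g : ℤ) (hb : 2 ≤ b) (hg : 3 ≤ g)
    (ε₁ ε₂ : ℤ) (hε₁ : ε₁ = 1 ∨ ε₁ = -1) (hε₂ : ε₂ = 1 ∨ ε₂ = -1)
    (d₁ d₂ : ℤ) (l m n : ℕ)
    (hd₁ : 1 ≤ d₁) (hd₁' : d₁ ≤ g - 1) (hd₂ : 1 ≤ d₂) (hd₂' : d₂ ≤ g - 1)
    (hl : 1 ≤ l) (hm : 1 ≤ m)
    (heq : DiffRepdigitEq b g ε₁ ε₂ d₁ d₂ l m n) :
    (b + ε₁) * b ^ n * (g - 1) ≠ d₁ * g ^ l :=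
  stmt_13_general b g hg ε₁ ε₂ hε₂ d₁ d₂ l m n hd₁ hd₂ hm heq
end

section
/- Let b ≥ 2 and g ≥ 3 be integers and ε₁, ε₂ ∈ {1, −1}. No solution (d₁, d₂, l, m, n) in integers 1 ≤ d₁, d₂ ≤ g−1, n ≥ 0, l, m ≥ 1 of the equation (b+ε₁)·b^n + ε₂ = d₁·(g^l−1)/(g−1) − d₂·(g^m−1)/(g−1) satisfies (g−1)·(b+ε₁)·b^n = d₁·g^l − d₂·g^m. -/
theorem Int.sub_one_mul_pow_sub_one_ediv (g : ℤ) (k : ℕ) :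
    (g - 1) * ((g ^ k - 1) / (g - 1)) = g ^ k - 1 :=
  Int.mul_ediv_cancel' (by simpa using sub_dvd_pow_sub_pow g 1 k)

theorem DiffRepdigitEq.sub_one_mul {b g ε₁ ε₂ d₁ d₂ : ℤ} {l m n : ℕ}
    (h : DiffRepdigitEq b g ε₁ ε₂ d₁ d₂ l m n) :
    (g - 1) * ((b + ε₁) * b ^ n + ε₂) = d₁ * (g ^ l - 1) - d₂ * (g ^ m - 1) := by
  unfold DiffRepdigitEq at h
  linear_combination (g - 1) * h + d₁ * Int.sub_one_mul_pow_sub_one_ediv g l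
    - d₂ * Int.sub_one_mul_pow_sub_one_ediv g m

theorem abs_sub_lt_of_mem_Icc {g d₁ d₂ : ℤ} (hd₁ : 1 ≤ d₁) (hd₁' : d₁ ≤ g - 1)
    (hd₂ : 1 ≤ d₂) (hd₂' : d₂ ≤ g - 1) : |d₂ - d₁| < g - 1 :=
  abs_sub_lt_iff.mpr ⟨by linarith, by linarith⟩

theorem stmt_14_general (b g : ℤ)
    (ε₁ ε₂ : ℤ) (hε₂ : ε₂ = 1 ∨ ε₂ = -1)
    (d₁ d₂ : ℤ) (l m n : ℕ)
    (hd₁ : 1 ≤ d₁) (hd₁' : d₁ ≤ g - 1) (hd₂ : 1 ≤ d₂) (hd₂' : d₂ ≤ g - 1)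
    (heq : DiffRepdigitEq b g ε₁ ε₂ d₁ d₂ l m n) :
    (g - 1) * ((b + ε₁) * b ^ n) ≠ d₁ * g ^ l - d₂ * g ^ m := by
  intro h
  have hε₂_digits : (g - 1) * ε₂ = d₂ - d₁ := by
    linear_combination heq.sub_one_mul - h
  have hgap := abs_sub_lt_of_mem_Icc hd₁ hd₁' hd₂ hd₂'
  rw [← hε₂_digits, abs_mul, abs_of_pos (by linarith : (0 : ℤ) < g - 1)] at hgap
  rcases hε₂ with rfl | rfl <;> simp at hgap

/-- Lemma (`Λ₄ ≠ 0`): no solution of the difference equation satisfies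
`(g−1)·(b + ε₁)·b^n = d₁·g^l − d₂·g^m`. -/
theorem stmt_14 (b g : ℤ) (hb : 2 ≤ b) (hg : 3 ≤ g)
    (ε₁ ε₂ : ℤ) (hε₁ : ε₁ = 1 ∨ ε₁ = -1) (hε₂ : ε₂ = 1 ∨ ε₂ = -1)
    (d₁ d₂ : ℤ) (l m n : ℕ)
    (hd₁ : 1 ≤ d₁) (hd₁' : d₁ ≤ g - 1) (hd₂ : 1 ≤ d₂) (hd₂' : d₂ ≤ g - 1)
    (hl : 1 ≤ l) (hm : 1 ≤ m)
    (heq : DiffRepdigitEq b g ε₁ ε₂ d₁ d₂ l m n) :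
    (g - 1) * ((b + ε₁) * b ^ n) ≠ d₁ * g ^ l - d₂ * g ^ m :=
  stmt_14_general b g ε₁ ε₂ hε₂ d₁ d₂ l m n hd₁ hd₁' hd₂ hd₂' heq
end

section
/- Let M be a positive integer, let τ be an irrational real number, and let p/q be a convergent of the continued fraction expansion of τ with q > 6M. Let A, B, μ be real numbers with A > 0 and B > 1, and set ε := ‖μq‖ − M·‖τq‖, where ‖x‖ denotes the distance from the real number x to the nearest integer. If ε > 0, then there exist no positive integers m, n, w with m ≤ M and w ≥ log(Aq/ε)/log B satisfying 0 < |m·τ − n + μ| < A·B^{−w}. -/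
/-- `‖x‖`: the distance from the real number `x` to the nearest integer. -/
noncomputable def distNearestInt (x : ℝ) : ℝ := |x - round x|

/-!
Writing `D = mτ - n + μ`, the identity
`μq = qD - m(τq) + nq` with `nq ∈ ℤ` gives `‖μq‖ ≤ q|D| + m‖τq‖ ≤ q|D| + M‖τq‖`, i.e. `ε ≤ q|D|`.
On the other hand the bound on `w` gives `B^w ≥ Aq/ε`, so `|D| < A B^(-w) ≤ ε/q`.
-/

namespace distNearestInt

theorem le_abs_sub_intCast (x : ℝ) (k : ℤ) : distNearestInt x ≤ |x - k| :=
  round_le x k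

theorem le_abs (x : ℝ) : distNearestInt x ≤ |x| := by
  simpa using le_abs_sub_intCast x 0

theorem add_intCast_le (x : ℝ) (k : ℤ) : distNearestInt (x + k) ≤ distNearestInt x := by
  have := le_abs_sub_intCast (x + k) (round x + k)
  rwa [Int.cast_add, add_sub_add_right_eq_sub] at this

theorem add_le (x y : ℝ) : distNearestInt (x + y) ≤ distNearestInt x + distNearestInt y :=
  calc distNearestInt (x + y) ≤ |(x - round x) + (y - round y)| := by
        simpa [add_sub_add_comm] using le_abs_sub_intCast (x + y) (round x + round y)
    _ ≤ distNearestInt x + distNearestInt y := abs_add_le _ _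

theorem intCast_mul_le (z : ℤ) (x : ℝ) : distNearestInt (z * x) ≤ |(z : ℝ)| * distNearestInt x :=
  calc distNearestInt (z * x) ≤ |z * x - ((z * round x : ℤ) : ℝ)| := le_abs_sub_intCast _ _
    _ = |(z : ℝ)| * distNearestInt x := by
        rw [distNearestInt, ← abs_mul, Int.cast_mul, mul_sub]

end distNearestInt

theorem distNearestInt_mul_le (τ μ : ℝ) (m n q : ℤ) :
    distNearestInt (μ * q) ≤ |(q : ℝ)| * |m * τ - n + μ| + |(m : ℝ)| * distNearestInt (τ * q) := by
  have hsplit : μ * q = (q * (m * τ - n + μ) + (-m : ℤ) * (τ * q)) + ((n * q : ℤ) : ℝ) := by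
    push_cast; ring
  calc distNearestInt (μ * q)
      ≤ distNearestInt (q * (m * τ - n + μ)) + distNearestInt ((-m : ℤ) * (τ * q)) := by
        rw [hsplit]
        exact (distNearestInt.add_intCast_le _ _).trans (distNearestInt.add_le _ _)
    _ ≤ |(q : ℝ)| * |m * τ - n + μ| + |(m : ℝ)| * distNearestInt (τ * q) := by
        gcongr
        · exact (distNearestInt.le_abs _).trans_eq (abs_mul _ _)
        · simpa using distNearestInt.intCast_mul_le (-m) (τ * q)

theorem le_pow_of_log_div_log_le {X B : ℝ} (hX : 0 < X) (hB : 1 < B) {w : ℕ}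
    (h : Real.log X / Real.log B ≤ w) : X ≤ B ^ w := by
  rw [div_le_iff₀ (Real.log_pos hB), ← Real.log_pow] at h
  exact (Real.log_le_log_iff hX (pow_pos (zero_lt_one.trans hB) w)).mp h

theorem stmt_15_general (M : ℕ) (τ : ℝ)
    (q : ℤ) (hq : 0 < q)
    (A B μ : ℝ) (hA : 0 < A) (hB : 1 < B)
    (hε : 0 < distNearestInt (μ * q) - M * distNearestInt (τ * q)) :
    ¬ ∃ m n w : ℕ, 0 < m ∧ 0 < n ∧ 0 < w ∧ m ≤ M ∧
      Real.log (A * q / (distNearestInt (μ * q) - M * distNearestInt (τ * q))) /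
        Real.log B ≤ (w : ℝ) ∧
      0 < |(m : ℝ) * τ - (n : ℝ) + μ| ∧
      |(m : ℝ) * τ - (n : ℝ) + μ| < A * B ^ (-(w : ℤ)) := by
  rintro ⟨m, n, w, -, -, -, hmM, hw, -, hD⟩
  set ε := distNearestInt (μ * q) - M * distNearestInt (τ * q)
  set D := (m : ℝ) * τ - n + μ
  have hq' : (0 : ℝ) < q := by exact_mod_cast hq
  have hBw : 0 < B ^ w := pow_pos (zero_lt_one.trans hB) w
  have hAq : A * q ≤ ε * B ^ w :=
    (div_le_iff₀' hε).mp (le_pow_of_log_div_log_le (by positivity) hB hw)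
  have hupper : q * |D| < ε := by
    rw [zpow_neg, zpow_natCast, ← div_eq_mul_inv, lt_div_iff₀ hBw] at hD
    nlinarith
  have hlower : ε ≤ q * |D| := by
    have h := distNearestInt_mul_le τ μ m n q
    have hmM' : (m : ℝ) ≤ M := by exact_mod_cast hmM
    simp only [Int.cast_natCast, abs_of_pos hq', Nat.abs_cast] at h
    have hmτ : (m : ℝ) * distNearestInt (τ * q) ≤ M * distNearestInt (τ * q) :=
      mul_le_mul_of_nonneg_right hmM' (abs_nonneg _)
    linarith
  linarith

/-- Baker–Davenport reduction (part a), Bravo–Gómez–Luca form): let `M` be a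
positive integer, `τ` irrational, `p/q` a convergent of `τ` (so `q > 0`,
`gcd(p,q) = 1` and `|p − qτ| < 1/q`) with `q > 6M`, let `A > 0`, `B > 1` and `μ`
be reals, and set `ε = ‖μq‖ − M·‖τq‖`. If `ε > 0` then there are no positive
integers `m, n, w` with `m ≤ M`, `w ≥ log(Aq/ε)/log B` and
`0 < |mτ − n + μ| < A·B^(−w)`. -/
theorem stmt_15 (M : ℕ) (hM : 0 < M) (τ : ℝ) (hτ : Irrational τ)
    (p q : ℤ) (hq : 0 < q) (hpq : Int.gcd p q = 1)
    (hconv : |(p : ℝ) - (q : ℝ) * τ| < 1 / (q : ℝ)) (hqM : 6 * (M : ℤ) < q)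
    (A B μ : ℝ) (hA : 0 < A) (hB : 1 < B)
    (hε : 0 < distNearestInt (μ * q) - M * distNearestInt (τ * q)) :
    ¬ ∃ m n w : ℕ, 0 < m ∧ 0 < n ∧ 0 < w ∧ m ≤ M ∧
      Real.log (A * q / (distNearestInt (μ * q) - M * distNearestInt (τ * q))) /
        Real.log B ≤ (w : ℝ) ∧
      0 < |(m : ℝ) * τ - (n : ℝ) + μ| ∧
      |(m : ℝ) * τ - (n : ℝ) + μ| < A * B ^ (-(w : ℤ)) :=
  stmt_15_general M τ q hq A B μ hA hB hε
end

section
/- Let M be a positive integer, let τ be an irrational real number, and let p/q be a convergent of the continued fraction expansion of τ with q > 6M. Let A, B, μ be real numbers with A > 0 and B > 1, and set r := ⌊μq + 1/2⌋. If positive integers m, n, w satisfy m ≤ M, w > log(3Aq)/log B and 0 < |m·τ − n + μ| < A·B^{−w}, then m·p + r = q·n; in particular m·p ≡ −r (mod q), so m is the unique solution m₀ < q of this congruence, and if m₀ > M there is no such solution at all. -/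
/-!
Write `N = m p + r - q n` with `r` the nearest integer to `μ q`. Then
`N = q (m τ - n + μ) + m (p - q τ) - (μ q - r)`, and the three terms are bounded by `1/3`
(the choice of `w` gives `3 A q < B ^ w`), by `1/6` (since `|p - q τ| < 1/q` and `6 m < q`) and
by `1/2` (rounding). So the integer `N` has absolute value less than `1`, hence vanishes.
-/

open Real

theorem lt_rpow_of_log_div_log_lt {x B z : ℝ} (hx : 0 < x) (hB : 1 < B)
    (h : log x / log B < z) : x < B ^ z := by
  rw [lt_rpow_iff_log_lt hx (by linarith)]
  exact (div_lt_iff₀ (log_pos hB)).mp h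

theorem abs_mul_lt_third {x A B q : ℝ} {w : ℕ} (hq : 0 < q) (hB : 0 < B)
    (hx : |x| < A * B ^ (-(w : ℤ))) (hBw : 3 * A * q < B ^ w) : |q * x| < 1 / 3 := by
  have hBw_pos : 0 < B ^ w := pow_pos hB w
  rw [zpow_neg, zpow_natCast, ← div_eq_mul_inv] at hx
  rw [abs_mul, abs_of_pos hq, lt_div_iff₀ (by norm_num : (0 : ℝ) < 3)]
  calc q * |x| * 3 ≤ q * (A / B ^ w) * 3 := by gcongr
    _ = 3 * A * q / B ^ w := by ring
    _ < 1 := (div_lt_one hBw_pos).mpr hBw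

theorem abs_mul_lt_sixth {x m q : ℝ} (hm : 0 ≤ m) (hmq : 6 * m < q) (hx : |x| < 1 / q) :
    |m * x| < 1 / 6 := by
  have hq : 0 < q := by linarith
  rw [abs_mul, abs_of_nonneg hm]
  calc m * |x| ≤ m * (1 / q) := by gcongr
    _ < 1 / 6 := by rw [mul_one_div, div_lt_div_iff₀ hq (by norm_num)]; linarith

theorem mul_add_round_eq_of_abs_add_abs_lt_half {m n p q : ℤ} {τ μ : ℝ}
    (h : |q * (m * τ - n + μ)| + |m * (p - q * τ)| < 1 / 2) :
    m * p + round (μ * q) = q * n := by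
  have hdecomp : ((m * p + round (μ * q) - q * n : ℤ) : ℝ) =
      q * (m * τ - n + μ) + m * (p - q * τ) - (μ * q - round (μ * q)) := by
    push_cast
    ring
  have hlt : |((m * p + round (μ * q) - q * n : ℤ) : ℝ)| < 1 := by
    rw [hdecomp]
    calc _ ≤ |q * (m * τ - n + μ)| + |m * (p - q * τ)| + |μ * q - round (μ * q)| :=
          (abs_sub _ _).trans (add_le_add_left (abs_add_le _ _) _)
      _ < 1 := by linarith [abs_sub_round (μ * q)]
  have hzero := Int.abs_lt_one_iff.mp (by exact_mod_cast hlt)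
  linarith

theorem stmt_16_general (M : ℕ) (τ : ℝ)
    (p q : ℤ) (hq : 0 < q)
    (hconv : |(p : ℝ) - (q : ℝ) * τ| < 1 / (q : ℝ)) (hqM : 6 * (M : ℤ) < q)
    (A B μ : ℝ) (hA : 0 < A) (hB : 1 < B)
    (m n w : ℕ) (hmM : m ≤ M)
    (hwlog : Real.log (3 * A * q) / Real.log B < (w : ℝ))
    (hsmall : |(m : ℝ) * τ - (n : ℝ) + μ| < A * B ^ (-(w : ℤ))) :
    (m : ℤ) * p + ⌊μ * (q : ℝ) + 1 / 2⌋ = q * n ∧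
      (m : ℤ) * p ≡ -⌊μ * (q : ℝ) + 1 / 2⌋ [ZMOD q] := by
  have hq' : (0 : ℝ) < q := by exact_mod_cast hq
  have hBw : 3 * A * q < B ^ w := by
    simpa using lt_rpow_of_log_div_log_lt (by positivity) hB hwlog
  have hmq : 6 * (m : ℝ) < q := by exact_mod_cast (show 6 * (m : ℤ) < q by omega)
  have heq : (m : ℤ) * p + round (μ * q) = q * n := by
    apply mul_add_round_eq_of_abs_add_abs_lt_half (τ := τ)
    have h₁ := abs_mul_lt_third hq' (by linarith) hsmall hBw
    have h₂ := abs_mul_lt_sixth (Nat.cast_nonneg m) hmq hconv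
    push_cast
    linarith
  rw [round_eq] at heq
  exact ⟨heq, Int.modEq_iff_dvd.mpr ⟨-n, by linear_combination -heq⟩⟩

/-- Baker–Davenport reduction (part b), following Remark 14.3 of Dujella's book):
let `M` be a positive integer, `τ` irrational, `p/q` a convergent of `τ`
(so `q > 0`, `gcd(p,q) = 1` and `|p − qτ| < 1/q`) with `q > 6M`, let `A > 0`,
`B > 1` and `μ` be reals, and set `r = ⌊μq + 1/2⌋`. If positive integers
`m, n, w` satisfy `m ≤ M`, `w > log(3Aq)/log B` and `0 < |mτ − n + μ| < A·B^(−w)`,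
then `mp + r = qn`; in particular `mp ≡ −r (mod q)`. -/
theorem stmt_16 (M : ℕ) (hM : 0 < M) (τ : ℝ) (hτ : Irrational τ)
    (p q : ℤ) (hq : 0 < q) (hpq : Int.gcd p q = 1)
    (hconv : |(p : ℝ) - (q : ℝ) * τ| < 1 / (q : ℝ)) (hqM : 6 * (M : ℤ) < q)
    (A B μ : ℝ) (hA : 0 < A) (hB : 1 < B)
    (m n w : ℕ) (hm : 0 < m) (hn : 0 < n) (hw : 0 < w) (hmM : m ≤ M)
    (hwlog : Real.log (3 * A * q) / Real.log B < (w : ℝ))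
    (hpos : 0 < |(m : ℝ) * τ - (n : ℝ) + μ|)
    (hsmall : |(m : ℝ) * τ - (n : ℝ) + μ| < A * B ^ (-(w : ℤ))) :
    (m : ℤ) * p + ⌊μ * (q : ℝ) + 1 / 2⌋ = q * n ∧
      (m : ℤ) * p ≡ -⌊μ * (q : ℝ) + 1 / 2⌋ [ZMOD q] :=
  stmt_16_general M τ p q hq hconv hqM A B μ hA hB m n w hmM hwlog hsmall
end

section
/- Let b = g = 10. The solutions (ε₁, ε₂, d₁, d₂, l, m, n) of the equations (10+ε₁)·10^n + ε₂ = d₁·(10^l−1)/9 + d₂·(10^m−1)/9, with ε₁, ε₂ ∈ {1, −1}, integers 1 ≤ d₁, d₂ ≤ 9, 1 ≤ l ≤ m and n ≥ 1, are exactly the following: the infinite family (ε₁, ε₂) = (−1, −1), (d₁, d₂, l, m, n) = (1, 8, n, n+1, n) for n ≥ 1, and the single additional solution (ε₁, ε₂) = (−1, 1), (d₁, d₂, l, m, n) = (3, 8, 1, 2, 1), i.e. 9·10 + 1 = 3·(10−1)/9 + 8·(10²−1)/9. -/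
/-!
Multiplying by 9 turns the equation into `9 ((10 + ε₁) 10ⁿ + ε₂) = d₁ (10ˡ - 1) + d₂ (10ᵐ - 1)`,
and comparing orders of magnitude forces `m = n + 1`. With `N = 10ⁿ`, every remaining case becomes
an identity `c N + r = 0` with `|r| < N`, hence `c = r = 0`. For `l < n` and for `l = n + 1` the
coefficient `c` is `≡ 9 ε₁ (mod 10)`, so it cannot vanish; for `l = n` the two equations `c = 0`,
`r = 0` pin down the infinite family. The bound `|r| < N` needs `N ≥ 100`: for `n = 1` the
equation is linear in the digits, and it also has the sporadic solution.
-/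

lemma nine_mul_repunit (k : ℕ) : (9 : ℤ) * ((10 ^ k - 1) / 9) = 10 ^ k - 1 :=
  Int.mul_ediv_cancel' (by simpa using sub_one_dvd_pow_sub_one (10 : ℤ) k)

lemma eq_zero_and_eq_zero_of_mul_add_eq_zero {c r N : ℤ} (hr : |r| < N) (h : c * N + r = 0) :
    c = 0 ∧ r = 0 := by
  have hN : N ≠ 0 := (lt_of_le_of_lt (abs_nonneg r) hr).ne'
  have hcN : c * N = 0 := by
    refine Int.eq_zero_of_abs_lt_dvd (dvd_mul_left N c) ?_
    rwa [show c * N = -r by linarith, abs_neg]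
  have hc : c = 0 := (mul_eq_zero.mp hcN).resolve_right hN
  exact ⟨hc, by simpa [hc] using h⟩

section

variable {ε₁ ε₂ d₁ d₂ : ℤ} {l m n : ℕ}

lemma exponent_eq_succ (hε₁ : |ε₁| ≤ 1) (hε₂ : |ε₂| ≤ 1)
    (hd₁ : 1 ≤ d₁) (hd₁' : d₁ ≤ 9) (hd₂ : 1 ≤ d₂) (hd₂' : d₂ ≤ 9) (hl : 1 ≤ l) (hlm : l ≤ m)
    (hn : 1 ≤ n) (h : 9 * ((10 + ε₁) * 10 ^ n + ε₂) = d₁ * (10 ^ l - 1) + d₂ * (10 ^ m - 1)) :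
    m = n + 1 := by
  obtain ⟨hε₁, hε₁'⟩ := abs_le.mp hε₁
  obtain ⟨hε₂, hε₂'⟩ := abs_le.mp hε₂
  have hN : (10 : ℤ) ≤ 10 ^ n := le_self_pow₀ (by norm_num) (by omega)
  have hl10 : (10 : ℤ) ≤ 10 ^ l := le_self_pow₀ (by norm_num) (by omega)
  have hlm10 : (10 : ℤ) ^ l ≤ 10 ^ m := pow_le_pow_right₀ (by norm_num) hlm
  have hε₁N : ε₁ * 10 ^ n ≤ 10 ^ n := by nlinarith
  have hε₁N' : -10 ^ n ≤ ε₁ * 10 ^ n := by nlinarith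
  have hd₁l : 9 ≤ d₁ * (10 ^ l - 1) := by nlinarith
  have hd₂m : 10 ^ m - 1 ≤ d₂ * (10 ^ m - 1) := by nlinarith
  rcases lt_trichotomy m (n + 1) with hm | hm | hm
  · have hmn : (10 : ℤ) ^ m ≤ 10 ^ n := pow_le_pow_right₀ (by norm_num) (by omega)
    have : d₁ * (10 ^ l - 1) ≤ 9 * (10 ^ n - 1) := by nlinarith
    have : d₂ * (10 ^ m - 1) ≤ 9 * (10 ^ n - 1) := by nlinarith
    linarith
  · exact hm
  · have : (10 : ℤ) ^ (n + 2) ≤ 10 ^ m := pow_le_pow_right₀ (by norm_num) hm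
    have : (10 : ℤ) ^ (n + 2) = 100 * 10 ^ n := by ring
    linarith

lemma le_exponent_of_exponent_succ (hε₁ : ε₁ = 1 ∨ ε₁ = -1) (hε₂ : |ε₂| ≤ 1)
    (hd₁ : 1 ≤ d₁) (hd₁' : d₁ ≤ 9) (hd₂ : 1 ≤ d₂) (hd₂' : d₂ ≤ 9) (hl : 1 ≤ l)
    (h : 9 * ((10 + ε₁) * 10 ^ n + ε₂) = d₁ * (10 ^ l - 1) + d₂ * (10 ^ (n + 1) - 1)) :
    n ≤ l := by
  by_contra! hln
  obtain ⟨hε₂, hε₂'⟩ := abs_le.mp hε₂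
  have hl10 : (10 : ℤ) ≤ 10 ^ l := le_self_pow₀ (by norm_num) (by omega)
  have hlN : (10 : ℤ) ^ (l + 1) ≤ 10 ^ n := pow_le_pow_right₀ (by norm_num) hln
  have hd₁l : 9 ≤ d₁ * (10 ^ l - 1) := by nlinarith
  have hd₁l' : d₁ * (10 ^ l - 1) ≤ 9 * (10 ^ l - 1) := by nlinarith
  have hr : |9 * ε₂ + d₂ - d₁ * (10 ^ l - 1)| < 10 ^ n :=
    abs_lt.mpr ⟨by linarith [pow_succ (10 : ℤ) l], by linarith [pow_succ (10 : ℤ) l]⟩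
  obtain ⟨hc, -⟩ := eq_zero_and_eq_zero_of_mul_add_eq_zero (c := 90 + 9 * ε₁ - 10 * d₂) hr
    (by linear_combination h - d₂ * pow_succ (10 : ℤ) n)
  omega

lemma solutions_of_exponent_succ (hε₁ : ε₁ = 1 ∨ ε₁ = -1) (hε₂ : ε₂ = 1 ∨ ε₂ = -1)
    (hd₁ : 1 ≤ d₁) (hd₁' : d₁ ≤ 9) (hd₂ : 1 ≤ d₂) (hd₂' : d₂ ≤ 9)
    (hl : 1 ≤ l) (hlm : l ≤ m) (hn : 1 ≤ n) (hm : m = n + 1)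
    (h : 9 * ((10 + ε₁) * 10 ^ n + ε₂) = d₁ * (10 ^ l - 1) + d₂ * (10 ^ m - 1)) :
    (ε₁ = -1 ∧ ε₂ = -1 ∧ d₁ = 1 ∧ d₂ = 8 ∧ l = n ∧ m = n + 1) ∨
      (ε₁ = -1 ∧ ε₂ = 1 ∧ d₁ = 3 ∧ d₂ = 8 ∧ l = 1 ∧ m = 2 ∧ n = 1) := by
  subst hm
  have hε₂' : |ε₂| ≤ 1 := by rcases hε₂ with rfl | rfl <;> norm_num
  have hnl := le_exponent_of_exponent_succ hε₁ hε₂' hd₁ hd₁' hd₂ hd₂' hl h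
  obtain rfl | hn2 := eq_or_lt_of_le hn
  · obtain rfl | rfl : l = 1 ∨ l = 2 := by omega
    all_goals norm_num at h; omega
  have hN : (100 : ℤ) ≤ 10 ^ n := by
    simpa using pow_le_pow_right₀ (show (1 : ℤ) ≤ 10 by norm_num) hn2
  have hr : |9 * ε₂ + d₂ + d₁| < 10 ^ n := abs_lt.mpr ⟨by omega, by omega⟩
  obtain hl | hl : l = n ∨ l = n + 1 := by omega
  all_goals subst l
  · obtain ⟨hc, hr0⟩ := eq_zero_and_eq_zero_of_mul_add_eq_zero
      (c := 90 + 9 * ε₁ - 10 * d₂ - d₁) hr (by linear_combination h + d₂ * pow_succ (10 : ℤ) n)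
    omega
  · obtain ⟨hc, -⟩ := eq_zero_and_eq_zero_of_mul_add_eq_zero
      (c := 90 + 9 * ε₁ - 10 * d₂ - 10 * d₁) hr
      (by linear_combination h + (d₁ + d₂) * pow_succ (10 : ℤ) n)
    omega

end

lemma eq_repdigit_add_repdigit_iff (x d₁ d₂ : ℤ) (l m : ℕ) :
    x = d₁ * ((10 ^ l - 1) / 9) + d₂ * ((10 ^ m - 1) / 9) ↔
      9 * x = d₁ * (10 ^ l - 1) + d₂ * (10 ^ m - 1) := by
  have hl := nine_mul_repunit l
  have hm := nine_mul_repunit m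
  constructor
  · intro h
    linear_combination 9 * h + d₁ * hl + d₂ * hm
  · intro h
    refine mul_left_cancel₀ (show (9 : ℤ) ≠ 0 by norm_num) ?_
    linear_combination h - d₁ * hl - d₂ * hm

/-- For `b = g = 10`: the solutions of
`(10 + ε₁)·10^n + ε₂ = d₁·(10^l−1)/9 + d₂·(10^m−1)/9` with `ε₁, ε₂ ∈ {1, −1}`,
`1 ≤ d₁, d₂ ≤ 9`, `1 ≤ l ≤ m` and `n ≥ 1` are exactly the infinite family
`(ε₁, ε₂) = (−1, −1)`, `(d₁, d₂, l, m, n) = (1, 8, n, n+1, n)` and the single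
additional solution `(ε₁, ε₂) = (−1, 1)`, `(d₁, d₂, l, m, n) = (3, 8, 1, 2, 1)`,
i.e. `9·10 + 1 = 3·(10−1)/9 + 8·(10²−1)/9`. -/
theorem stmt_18 (ε₁ ε₂ : ℤ) (hε₁ : ε₁ = 1 ∨ ε₁ = -1) (hε₂ : ε₂ = 1 ∨ ε₂ = -1)
    (d₁ d₂ : ℤ) (l m n : ℕ)
    (hd₁ : 1 ≤ d₁) (hd₁' : d₁ ≤ 9) (hd₂ : 1 ≤ d₂) (hd₂' : d₂ ≤ 9)
    (hl : 1 ≤ l) (hlm : l ≤ m) (hn : 1 ≤ n) :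
    ((10 + ε₁) * 10 ^ n + ε₂ =
        d₁ * (((10 : ℤ) ^ l - 1) / 9) + d₂ * (((10 : ℤ) ^ m - 1) / 9)) ↔
      ((ε₁ = -1 ∧ ε₂ = -1 ∧ d₁ = 1 ∧ d₂ = 8 ∧ l = n ∧ m = n + 1) ∨
       (ε₁ = -1 ∧ ε₂ = 1 ∧ d₁ = 3 ∧ d₂ = 8 ∧ l = 1 ∧ m = 2 ∧ n = 1)) := by
  rw [eq_repdigit_add_repdigit_iff]
  constructor
  · intro h
    have hε₁' : |ε₁| ≤ 1 := by rcases hε₁ with rfl | rfl <;> norm_num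
    have hε₂' : |ε₂| ≤ 1 := by rcases hε₂ with rfl | rfl <;> norm_num
    exact solutions_of_exponent_succ hε₁ hε₂ hd₁ hd₁' hd₂ hd₂' hl hlm hn
      (exponent_eq_succ hε₁' hε₂' hd₁ hd₁' hd₂ hd₂' hl hlm hn h) h
  · rintro (⟨rfl, rfl, rfl, rfl, rfl, rfl⟩ | ⟨rfl, rfl, rfl, rfl, rfl, rfl, rfl⟩)
    · ring
    · norm_num
end
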